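/- arXiv:2210.09350 — 6 statements merged into one kernel-verified Lean document; each statement's English description precedes it below -/
import Mathlib

section
/- If r is a weak square root on a pseudo MV-algebra M, then for all x, y ∈ M: r is monotone (x ≤ y implies r(x) ≤ r(y)), x ∨ r(0) ≤ r(x), and r(x ∧ y) = r(x) ∧ r(y). -/
/-- A pseudo MV-algebra `(M; ⊕, ⁻, ∼, 0, 1)` satisfying axioms (A1)–(A8),
with `x ⊙ y := (y⁻ ⊕ x⁻)∼`. -/
class PseudoMV (M : Type*) where
  oplus : M → M → M
  lneg : M → M
  rneg : M → M
  zero : M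
  one : M
  oplus_assoc : ∀ x y z : M, oplus x (oplus y z) = oplus (oplus x y) z
  oplus_zero : ∀ x : M, oplus x zero = x
  zero_oplus : ∀ x : M, oplus zero x = x
  oplus_one : ∀ x : M, oplus x one = one
  one_oplus : ∀ x : M, oplus one x = one
  lneg_one : lneg one = zero
  rneg_one : rneg one = zero
  a5 : ∀ x y : M, rneg (oplus (lneg x) (lneg y)) = lneg (oplus (rneg x) (rneg y))
  a6₁ : ∀ x y : M,
    oplus x (rneg (oplus (lneg y) (lneg (rneg x)))) =
      oplus y (rneg (oplus (lneg x) (lneg (rneg y))))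
  a6₂ : ∀ x y : M,
    oplus x (rneg (oplus (lneg y) (lneg (rneg x)))) =
      oplus (rneg (oplus (lneg (lneg y)) (lneg x))) y
  a6₃ : ∀ x y : M,
    oplus x (rneg (oplus (lneg y) (lneg (rneg x)))) =
      oplus (rneg (oplus (lneg (lneg x)) (lneg y))) x
  a7 : ∀ x y : M,
    rneg (oplus (lneg (oplus (lneg x) y)) (lneg x)) =
      rneg (oplus (lneg y) (lneg (oplus x (rneg y))))
  a8 : ∀ x : M, rneg (lneg x) = x

namespace PseudoMV

variable {M : Type*} [PseudoMV M]

/-- `x ⊙ y := (y⁻ ⊕ x⁻)∼`. -/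
def mul (x y : M) : M := rneg (oplus (lneg y) (lneg x))

/-- `x ∨ y = x ⊕ (x∼ ⊙ y)` (axiom (A6)). -/
def sup (x y : M) : M := oplus x (mul (rneg x) y)

/-- `x ∧ y = x ⊙ (x⁻ ⊕ y)` (axiom (A7)). -/
def inf (x y : M) : M := mul x (oplus (lneg x) y)

/-- The lattice order of a pseudo MV-algebra. -/
def le (x y : M) : Prop := sup x y = y

/-- `x → y := x⁻ ⊕ y`. -/
def arrow (x y : M) : M := oplus (lneg x) y

/-- `x ⇝ y := y ⊕ x∼`. -/
def squig (x y : M) : M := oplus y (rneg x)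

/-- A weak square root: (Sq1) and (Sq2). -/
def IsWeakSqrt (r : M → M) : Prop :=
  (∀ x : M, mul (r x) (r x) = x) ∧
  (∀ x y : M, le (mul y y) x → le y (r x))

/-- A square root: (Sq1), (Sq2) and (Sq3). -/
def IsSqrt (r : M → M) : Prop :=
  IsWeakSqrt r ∧
  (∀ x : M, r (lneg x) = arrow (r x) (r zero) ∧ r (rneg x) = squig (r x) (r zero))

end PseudoMV

open PseudoMV

/-!
Sq1 and Sq2 together say that `r` is upper adjoint to squaring: `y ≤ r x ↔ y ⊙ y ≤ x`, the
backward direction being Sq2 and the forward one Sq1 together with monotonicity of `⊙`. Like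
every upper adjoint, `r` is then monotone and preserves meets, and `x ≤ r x` because
`x ⊙ x ≤ x`.
-/

namespace PseudoMV

variable {M : Type*} [PseudoMV M]

theorem lneg_rneg (x : M) : lneg (rneg x) = x := by
  have h := a5 x (one : M)
  rw [lneg_one, rneg_one, oplus_zero, oplus_zero, a8] at h
  exact h.symm

theorem lneg_zero : lneg (zero : M) = one := by
  rw [← rneg_one, lneg_rneg]

theorem lneg_oplus (x y : M) : lneg (oplus x y) = mul (lneg y) (lneg x) := by
  rw [mul, a5, a8, a8]

theorem rneg_oplus (x y : M) : rneg (oplus x y) = mul (rneg y) (rneg x) := by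
  rw [mul, lneg_rneg, lneg_rneg]

theorem lneg_mul (x y : M) : lneg (mul x y) = oplus (lneg y) (lneg x) := by
  rw [mul, lneg_rneg]

theorem rneg_mul (x y : M) : rneg (mul x y) = oplus (rneg y) (rneg x) := by
  rw [mul, a5, a8]

theorem mul_one (x : M) : mul x one = x := by
  rw [mul, lneg_one, zero_oplus, a8]

theorem one_mul (x : M) : mul one x = x := by
  rw [mul, lneg_one, oplus_zero, a8]

theorem mul_assoc (x y z : M) : mul (mul x y) z = mul x (mul y z) := by
  simp only [mul, lneg_rneg, oplus_assoc]

theorem oplus_rneg_self (x : M) : oplus x (rneg x) = one := by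
  have h := a6₂ x (one : M)
  rwa [lneg_one, zero_oplus, a8, oplus_one] at h

theorem lneg_oplus_self (x : M) : oplus (lneg x) x = one := by
  have h := a6₃ x (one : M)
  rw [lneg_one, zero_oplus, a8, oplus_zero, a8] at h
  rw [← h, oplus_rneg_self]

theorem mul_lneg_self (x : M) : mul x (lneg x) = zero := by
  rw [mul, a5, a8, oplus_rneg_self, lneg_one]

theorem sup_comm (x y : M) : sup x y = sup y x := a6₁ x y

theorem sup_eq_mul_lneg_oplus (x y : M) : sup x y = oplus (mul x (lneg y)) y := a6₂ x y

theorem inf_eq_oplus_rneg_mul (x y : M) : inf x y = mul (oplus x (rneg y)) y := a7 x y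

theorem le_of_lneg_oplus_eq_one {x y : M} (h : oplus (lneg x) y = one) : le x y := by
  rw [le, sup_comm, sup, mul, lneg_rneg, h, rneg_one, oplus_zero]

theorem oplus_rneg_eq_one_of_le {x y : M} (h : le x y) : oplus y (rneg x) = one := by
  rw [le, sup_comm, sup_eq_mul_lneg_oplus] at h
  rw [← h, ← oplus_assoc, oplus_rneg_self, oplus_one]

theorem lneg_oplus_eq_one_of_oplus_rneg_eq_one {x y : M} (h : oplus y (rneg x) = one) :
    oplus (lneg x) y = one := by
  have hx : mul y (oplus (lneg y) x) = x := by
    rw [← inf, inf_eq_oplus_rneg_mul, h, one_mul]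
  rw [← hx, lneg_mul, ← oplus_assoc, lneg_oplus_self, oplus_one]

theorem le_iff_lneg_oplus_eq_one {x y : M} : le x y ↔ oplus (lneg x) y = one :=
  ⟨fun h => lneg_oplus_eq_one_of_oplus_rneg_eq_one (oplus_rneg_eq_one_of_le h),
    le_of_lneg_oplus_eq_one⟩

theorem le_iff_oplus_rneg_eq_one {x y : M} : le x y ↔ oplus y (rneg x) = one :=
  ⟨oplus_rneg_eq_one_of_le,
    fun h => le_of_lneg_oplus_eq_one (lneg_oplus_eq_one_of_oplus_rneg_eq_one h)⟩

theorem le_antisymm {x y : M} (hxy : le x y) (hyx : le y x) : x = y := by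
  rw [le] at hxy hyx
  rw [← hyx, sup_comm, hxy]

theorem zero_le (x : M) : le zero x :=
  le_of_lneg_oplus_eq_one (by rw [lneg_zero, one_oplus])

theorem mul_le_left (x y : M) : le (mul x y) x :=
  le_of_lneg_oplus_eq_one (by rw [lneg_mul, ← oplus_assoc, lneg_oplus_self, oplus_one])

theorem mul_le_right (x y : M) : le (mul x y) y :=
  le_iff_oplus_rneg_eq_one.mpr (by rw [rneg_mul, oplus_assoc, oplus_rneg_self, one_oplus])

theorem oplus_rneg_mul_of_le {x y : M} (h : le x y) : mul (oplus x (rneg y)) y = x := by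
  rw [← inf_eq_oplus_rneg_mul, inf, le_iff_lneg_oplus_eq_one.mp h, mul_one]

theorem mul_lneg_oplus_of_le {x y : M} (h : le x y) : mul y (oplus (lneg y) x) = x := by
  rw [← inf, inf_eq_oplus_rneg_mul, oplus_rneg_eq_one_of_le h, one_mul]

theorem le_trans {x y z : M} (hxy : le x y) (hyz : le y z) : le x z := by
  rw [← oplus_rneg_mul_of_le hxy, ← oplus_rneg_mul_of_le hyz, ← mul_assoc]
  exact mul_le_right _ _

theorem lneg_le_lneg_iff {x y : M} : le (lneg y) (lneg x) ↔ le x y := by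
  rw [le_iff_oplus_rneg_eq_one, a8, le_iff_lneg_oplus_eq_one]

theorem rneg_le_rneg_iff {x y : M} : le (rneg y) (rneg x) ↔ le x y := by
  rw [le_iff_lneg_oplus_eq_one, lneg_rneg, le_iff_oplus_rneg_eq_one]

theorem oplus_le_oplus_right {x y : M} (h : le x y) (z : M) :
    le (oplus x z) (oplus y z) := by
  rw [le_iff_oplus_rneg_eq_one, rneg_oplus, ← oplus_assoc, ← sup, sup_comm, sup, oplus_assoc,
    oplus_rneg_eq_one_of_le h, one_oplus]

theorem oplus_le_oplus_left {x y : M} (h : le x y) (z : M) :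
    le (oplus z x) (oplus z y) := by
  rw [le_iff_lneg_oplus_eq_one, lneg_oplus, oplus_assoc, ← sup_eq_mul_lneg_oplus, sup_comm,
    sup_eq_mul_lneg_oplus z (lneg x), ← oplus_assoc, le_iff_lneg_oplus_eq_one.mp h, oplus_one]

theorem mul_le_mul_right {x y : M} (h : le x y) (z : M) : le (mul x z) (mul y z) := by
  rw [← lneg_le_lneg_iff, lneg_mul, lneg_mul]
  exact oplus_le_oplus_left (lneg_le_lneg_iff.mpr h) _

theorem mul_le_mul_left {x y : M} (h : le x y) (z : M) : le (mul z x) (mul z y) := by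
  rw [← rneg_le_rneg_iff, rneg_mul, rneg_mul]
  exact oplus_le_oplus_right (rneg_le_rneg_iff.mpr h) _

theorem mul_le_mul {a b c d : M} (hab : le a b) (hcd : le c d) : le (mul a c) (mul b d) :=
  le_trans (mul_le_mul_right hab c) (mul_le_mul_left hcd b)

theorem sup_le {x y z : M} (hxz : le x z) (hyz : le y z) : le (sup x y) z := by
  have h : le (sup x y) (sup z y) := by
    rw [sup_eq_mul_lneg_oplus, sup_eq_mul_lneg_oplus z]
    exact oplus_le_oplus_right (mul_le_mul_right hxz _) y
  rwa [sup_comm z y, show sup y z = z from hyz] at h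

theorem inf_le_left (x y : M) : le (inf x y) x := mul_le_left _ _

theorem inf_le_right (x y : M) : le (inf x y) y := by
  rw [inf_eq_oplus_rneg_mul]
  exact mul_le_right _ _

theorem le_inf {x y z : M} (hzx : le z x) (hzy : le z y) : le z (inf x y) := by
  have h := mul_le_mul_left (oplus_le_oplus_left hzy (lneg x)) x
  rwa [mul_lneg_oplus_of_le hzx] at h

namespace IsWeakSqrt

variable {r : M → M}

theorem le_iff_mul_self_le (hr : IsWeakSqrt r) {x y : M} : le y (r x) ↔ le (mul y y) x := by
  refine ⟨fun h => ?_, hr.2 x y⟩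
  rw [← hr.1 x]
  exact mul_le_mul h h

theorem monotone (hr : IsWeakSqrt r) {x y : M} (h : le x y) : le (r x) (r y) :=
  hr.le_iff_mul_self_le.mpr (by rwa [hr.1])

theorem le_apply (hr : IsWeakSqrt r) (x : M) : le x (r x) :=
  hr.le_iff_mul_self_le.mpr (mul_le_left x x)

theorem sup_apply_zero_le (hr : IsWeakSqrt r) (x : M) : le (sup x (r zero)) (r x) :=
  sup_le (hr.le_apply x) (hr.monotone (zero_le x))

theorem map_inf (hr : IsWeakSqrt r) (x y : M) : r (inf x y) = inf (r x) (r y) :=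
  le_antisymm (le_inf (hr.monotone (inf_le_left x y)) (hr.monotone (inf_le_right x y)))
    (hr.le_iff_mul_self_le.mpr <| le_inf (hr.le_iff_mul_self_le.mp (inf_le_left _ _))
      (hr.le_iff_mul_self_le.mp (inf_le_right _ _)))

end IsWeakSqrt

end PseudoMV

theorem stmt1 {M : Type*} [PseudoMV M] (r : M → M) (hr : IsWeakSqrt r) :
    (∀ x y : M, le x y → le (r x) (r y)) ∧
    (∀ x : M, le (sup x (r zero)) (r x)) ∧
    (∀ x y : M, r (inf x y) = inf (r x) (r y)) :=
  ⟨fun _ _ => hr.monotone, hr.sup_apply_zero_le, hr.map_inf⟩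
end

section
/- If r is a square root on a pseudo MV-algebra M, then x ⊕ r(0) = r(0) ⊕ x and x ⊕ r(x) = r(x) ⊕ x for all x ∈ M. -/
open PseudoMV


/-!
Write `t = r 0`. Axiom (Sq3), applied to `x∼` and to `x⁻`, presents `r x` in two ways,
`r x = F ⊕ t = t ⊕ E` with `F = (r x∼)⁻` and `E = (r x⁻)∼`, and (Sq1) gives `F ⊕ F = x = E ⊕ E`.
Thus `t` conjugates `E` into `F`, hence `E ⊕ E` into `F ⊕ F`, i.e. `x` commutes with `t`;
and `x` commutes with `F` because `x = F ⊕ F`, so it commutes with `F ⊕ t = r x`.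
-/

namespace PseudoMV

variable {M : Type*} [PseudoMV M]

/-- `⊕` written additively, so that `AddCommute` and `AddSemiconjBy` apply; it is not
commutative in general. -/
instance : AddSemigroup M where
  add := oplus
  add_assoc x y z := (oplus_assoc x y z).symm

theorem mul_eq_rneg (x y : M) : mul x y = rneg (lneg y + lneg x) := rfl

theorem mul_eq_lneg (x y : M) : mul x y = lneg (rneg y + rneg x) := a5 y x

theorem lneg_add_lneg_of_mul_self {s b : M} (h : mul s s = b) :
    lneg s + lneg s = lneg b := by
  rw [← h, mul_eq_rneg, lneg_rneg]

theorem rneg_add_rneg_of_mul_self {s b : M} (h : mul s s = b) :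
    rneg s + rneg s = rneg b := by
  rw [← h, mul_eq_lneg, a8]

namespace IsSqrt

variable {r : M → M}

theorem eq_lneg_add (hr : IsSqrt r) (x : M) : r x = lneg (r (rneg x)) + r zero := by
  have h := (hr.2 (rneg x)).1
  rwa [lneg_rneg] at h

theorem eq_add_rneg (hr : IsSqrt r) (x : M) : r x = r zero + rneg (r (lneg x)) := by
  have h := (hr.2 (lneg x)).2
  rwa [a8] at h

theorem lneg_add_lneg (hr : IsSqrt r) (x : M) :
    lneg (r (rneg x)) + lneg (r (rneg x)) = x := by
  rw [lneg_add_lneg_of_mul_self (hr.1.1 (rneg x)), lneg_rneg]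

theorem rneg_add_rneg (hr : IsSqrt r) (x : M) :
    rneg (r (lneg x)) + rneg (r (lneg x)) = x := by
  rw [rneg_add_rneg_of_mul_self (hr.1.1 (lneg x)), a8]

theorem addCommute_zero (hr : IsSqrt r) (x : M) : AddCommute x (r zero) := by
  have hconj : AddSemiconjBy (r zero) (rneg (r (lneg x))) (lneg (r (rneg x))) :=
    (hr.eq_add_rneg x).symm.trans (hr.eq_lneg_add x)
  have h := hconj.add_right hconj
  rw [hr.rneg_add_rneg, hr.lneg_add_lneg] at h
  exact AddCommute.symm h

theorem addCommute_self (hr : IsSqrt r) (x : M) : AddCommute x (r x) := by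
  set F := lneg (r (rneg x))
  have hF : AddCommute F x := by
    rw [← hr.lneg_add_lneg x]
    exact (AddCommute.refl F).add_right (AddCommute.refl F)
  rw [hr.eq_lneg_add x]
  exact hF.symm.add_right (hr.addCommute_zero x)

end IsSqrt

end PseudoMV

theorem stmt9 {M : Type*} [PseudoMV M] (r : M → M) (hr : IsSqrt r) :
    ∀ x : M, oplus x (r zero) = oplus (r zero) x ∧ oplus x (r x) = oplus (r x) x :=
  fun x => ⟨hr.addCommute_zero x, hr.addCommute_self x⟩
end

section
/- Let r be a square root on a pseudo MV-algebra M. Then M is a Boolean algebra (i.e., every element is idempotent) if and only if r(0) = 0. -/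
open PseudoMV

/-!
If every element is idempotent then `x ⊙ x = x`, so (Sq1) at `0` gives `r 0 = 0`.
Conversely, if `r 0 = 0` then (Sq3) says `r` commutes with `∼`, and (Sq1) at `x∼`, read through
the involution `∼`, becomes `r x ⊕ r x = x`. Hence `r x ≤ x`, while (Sq2) applied to
`x ⊙ x ≤ x` gives `x ≤ r x`; so `r x = x` and `x ⊕ x = r x ⊕ r x = x`.
-/

namespace PseudoMV

variable {M : Type*} [PseudoMV M]

theorem rneg_injective : Function.Injective (rneg : M → M) :=
  Function.LeftInverse.injective lneg_rneg

theorem rneg_mul_rneg (x y : M) : mul (rneg x) (rneg y) = rneg (oplus y x) := by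
  rw [mul, lneg_rneg, lneg_rneg]

theorem mul_self_of_oplus_self (h : ∀ x : M, oplus x x = x) (x : M) : mul x x = x := by
  rw [mul, h, a8]

theorem mul_self_le (x : M) : le (mul x x) x := by
  change oplus (mul x x) (rneg (oplus (lneg x) (lneg (rneg (mul x x))))) = x
  rw [a6₂, mul, lneg_rneg, oplus_assoc, lneg_oplus_self, one_oplus, rneg_one, zero_oplus]

theorem le_oplus_self (x : M) : le x (oplus x x) := by
  change oplus x (rneg (oplus (lneg (oplus x x)) (lneg (rneg x)))) = oplus x x
  rw [a6₂, ← a8 x, a5, a8, ← oplus_assoc, oplus_rneg_self, oplus_one, lneg_one, zero_oplus]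

theorem IsWeakSqrt.le_self {r : M → M} (hr : IsWeakSqrt r) (x : M) : le x (r x) :=
  hr.2 x x (mul_self_le x)

theorem IsWeakSqrt.oplus_self_eq {r : M → M} (hr : IsWeakSqrt r) {x : M}
    (hx : r (rneg x) = rneg (r x)) : oplus (r x) (r x) = x := by
  apply rneg_injective
  rw [← rneg_mul_rneg, ← hx, hr.1]

theorem IsSqrt.rneg_comm {r : M → M} (hr : IsSqrt r) (h0 : r zero = zero) (x : M) :
    r (rneg x) = rneg (r x) := by
  rw [(hr.2 x).2, h0, squig, zero_oplus]

theorem IsSqrt.eq_self {r : M → M} (hr : IsSqrt r) (h0 : r zero = zero) (x : M) : r x = x := by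
  have hsum : oplus (r x) (r x) = x := hr.1.oplus_self_eq (hr.rneg_comm h0 x)
  refine le_antisymm ?_ (hr.1.le_self x)
  simpa only [hsum] using le_oplus_self (r x)

end PseudoMV

theorem stmt11 {M : Type*} [PseudoMV M] (r : M → M) (hr : IsSqrt r) :
    (∀ x : M, oplus x x = x) ↔ r zero = zero := by
  constructor
  · intro hbool
    simpa only [mul_self_of_oplus_self hbool] using hr.1.1 zero
  · intro h0 x
    have hsum := hr.1.oplus_self_eq (hr.rneg_comm h0 x)
    rwa [hr.eq_self h0 x] at hsum
end

section
/- Let (G, u) be a linearly ordered (or, more generally, representable) two-divisible unital ℓ-group with u/2 in the center of G, and let M = Γ(G, u) = [0, u] with x ⊕ y = (x + y) ∧ u, x⁻ = u − x, x∼ = −x + u. Then the map s(x) = (x + u)/2 is a strict square root on M. -/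
/-!
Since `u = v + v` with `v` central, `u` is central as well, and no commutativity beyond moving
`u` and `v` is ever needed. Doubling is injective and reflects `≤` in a linearly ordered group,
so each axiom is checked after doubling both sides, where `s x + s x = x + u` makes it linear
bookkeeping: `s 0` is the central half `v` of `u`, and `s (u - x) = (u - s x) + v`.
-/

theorem AddCommute.sub_add_eq_add_sub {G : Type*} [AddGroup G] {a b c : G}
    (h : AddCommute b c) : a - c + b = a + b - c := by
  rw [sub_eq_add_neg, add_assoc, ← h.neg_right.eq, ← add_assoc, ← sub_eq_add_neg]

theorem AddCommute.sub_add_sub_of_add_self_eq {G : Type*} [AddGroup G] {a u x : G}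
    (hc : AddCommute a u) (h : a + a = x + u) : u - a + (u - a) = u - x := by
  rw [eq_sub_of_add_eq h.symm]
  simp only [sub_eq_add_neg, neg_add_rev, neg_neg, add_assoc]
  rw [← add_assoc (-a) u, hc.neg_left.eq, add_assoc]

section LinearOrderedGroup

variable {G : Type*} [AddGroup G] [LinearOrder G] [AddLeftMono G] [AddRightMono G]

theorem add_self_le_add_self_iff {a b : G} : a + a ≤ b + b ↔ a ≤ b := by
  simpa only [two_nsmul] using (nsmul_right_strictMono (M := G) two_ne_zero).le_iff_le

theorem add_self_injective : Function.Injective fun a : G => a + a := by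
  simpa only [two_nsmul] using (nsmul_right_strictMono (M := G) two_ne_zero).injective

theorem le_of_sub_add_self_le {a u x y : G} (hc : AddCommute y u) (h : a + a = x + u)
    (hy : y - u + y ≤ x) : y ≤ a := by
  rw [← add_self_le_add_self_iff, h, ← sub_le_iff_le_add, ← hc.sub_add_eq_add_sub]
  exact hy

theorem eq_sub_add_of_add_self_eq {a b u v x : G} (hv : v + v = u) (hvc : ∀ g, AddCommute g v)
    (ha : a + a = x + u) (hb : b + b = u - x + u) : b = u - a + v := by
  have hu : AddCommute a u := hv ▸ (hvc a).add_right (hvc a)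
  apply add_self_injective
  dsimp only
  rw [hb, (hvc (u - a)).symm.add_add_add_comm, hu.sub_add_sub_of_add_self_eq ha, hv]

end LinearOrderedGroup

theorem stmt16_general {G : Type*} [AddGroup G] [LinearOrder G]
    [CovariantClass G G (· + ·) (· ≤ ·)]
    [CovariantClass G G (Function.swap (· + ·)) (· ≤ ·)]
    (u : G)
    (v : G) (hv : v + v = u) (hvcentral : ∀ g : G, g + v = v + g)
    (s : G → G) (hs : ∀ x : G, s x + s x = x + u) :
    (∀ x : G, 0 ≤ x → x ≤ u → 0 ≤ s x ∧ s x ≤ u) ∧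
    (∀ x : G, 0 ≤ x → x ≤ u → max (s x - u + s x) 0 = x) ∧
    (∀ x y : G, 0 ≤ x → x ≤ u → 0 ≤ y → y ≤ u →
      max (y - u + y) 0 ≤ x → y ≤ s x) ∧
    (∀ x : G, 0 ≤ x → x ≤ u →
      s (u - x) = min (u - s x + s 0) u ∧
      s (-x + u) = min (s 0 + (-(s x) + u)) u) ∧
    s 0 = u - s 0 := by
  have hvc : ∀ g, AddCommute g v := hvcentral
  have huc : ∀ g, AddCommute g u := fun g => hv ▸ (hvc g).add_right (hvc g)
  have hs0 : s 0 = v := add_self_injective (by simp only [hs, zero_add, hv])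
  have hv_le : ∀ x, 0 ≤ x → v ≤ s x := fun x hx => by
    rw [← add_self_le_add_self_iff, hv, hs]
    exact le_add_of_nonneg_left hx
  have hs_compl : ∀ x, 0 ≤ x → s (u - x) = min (u - s x + s 0) u := fun x hx => by
    rw [hs0, min_eq_left ((add_le_add_right (hv_le x hx) _).trans_eq (sub_add_cancel u (s x)))]
    exact eq_sub_add_of_add_self_eq hv hvc (hs x) (hs (u - x))
  refine ⟨fun x hx hxu => ⟨?_, ?_⟩, fun x hx _ => ?_, fun x y _ _ _ _ h => ?_,
    fun x hx _ => ⟨hs_compl x hx, ?_⟩, ?_⟩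
  · rw [← add_self_le_add_self_iff, hs, add_zero]
    exact add_nonneg hx (hx.trans hxu)
  · rw [← add_self_le_add_self_iff, hs]
    exact add_le_add_left hxu u
  · rw [(huc _).sub_add_eq_add_sub, hs, add_sub_cancel_right, max_eq_left hx]
  · exact le_of_sub_add_self_le (huc y) (hs x) ((le_max_left _ _).trans h)
  · rw [(huc (-x)).eq, ← sub_eq_add_neg, hs_compl x hx, (huc (-s x)).eq, ← sub_eq_add_neg,
      hs0, hvc]
  · rw [hs0]
    exact eq_sub_of_add_eq hv

/-- If `(G, u)` is a linearly ordered two-divisible unital ℓ-group with `u/2`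
central, then on `M = Γ(G,u) = [0,u]` (with `x ⊕ y = (x+y) ⊓ u`,
`x ⊙ y = (x - u + y) ⊔ 0`, `x⁻ = u - x`, `x∼ = -x + u`) the map
`s x = (x + u)/2` is a strict square root: it maps `M` into `M`, satisfies
(Sq1), (Sq2), (Sq3), and strictness `s 0 = (s 0)⁻`. -/
theorem stmt16 {G : Type*} [AddGroup G] [LinearOrder G]
    [CovariantClass G G (· + ·) (· ≤ ·)]
    [CovariantClass G G (Function.swap (· + ·)) (· ≤ ·)]
    (u : G) (hu : 0 ≤ u) (hstrong : ∀ g : G, ∃ n : ℕ, g ≤ n • u)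
    (hdiv : ∀ g : G, ∃ h : G, h + h = g)
    (v : G) (hv : v + v = u) (hvcentral : ∀ g : G, g + v = v + g)
    (s : G → G) (hs : ∀ x : G, s x + s x = x + u) :
    (∀ x : G, 0 ≤ x → x ≤ u → 0 ≤ s x ∧ s x ≤ u) ∧
    (∀ x : G, 0 ≤ x → x ≤ u → max (s x - u + s x) 0 = x) ∧
    (∀ x y : G, 0 ≤ x → x ≤ u → 0 ≤ y → y ≤ u →
      max (y - u + y) 0 ≤ x → y ≤ s x) ∧
    (∀ x : G, 0 ≤ x → x ≤ u →
      s (u - x) = min (u - s x + s 0) u ∧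
      s (-x + u) = min (s 0 + (-(s x) + u)) u) ∧
    s 0 = u - s 0 :=
  stmt16_general u v hv hvcentral s hs
end

section
/- Let M = Γ(G, u) where (G, u) is a linearly ordered (or representable) two-divisible unital ℓ-group. Then the map r(x) = ((x − u)/2) + u is a weak square root on M, and r(0) = u/2 = r(0)⁻ = r(0)∼ (so r is strict). -/
/-!
Write `s = r x - u` and `d = x - u`, so that `s + s = d`. In a linearly ordered group doubling is
strictly monotone, even without commutativity, so `s` inherits the order relations of `d` with
`0` and with `(y - u) + (y - u)`: this gives `r x ≤ u`, `x ≤ r x` and (Sq2). Adding `u` back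
turns `s + s = d` into `r x - u + r x = x`, which is (Sq1), and at `x = 0` it says that `r 0`
is a right and left complement of itself.
-/

section

variable {G : Type*} [AddGroup G] {u x a : G}

theorem sub_add_eq_of_sub_add_sub_eq (h : (a - u) + (a - u) = x - u) : a - u + a = x := by
  rw [← sub_add_cancel x u, ← h, add_assoc, sub_add_cancel]

theorem eq_neg_add_of_sub_add_eq_zero (h : a - u + a = 0) : a = -a + u :=
  sub_eq_iff_eq_add.1 (eq_neg_of_add_eq_zero_left h)

theorem add_self_eq_of_sub_add_eq_zero (h : a - u + a = 0) : a + a = u :=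
  calc a + a = a + (-a + u) := congrArg (a + ·) (eq_neg_add_of_sub_add_eq_zero h)
    _ = u := add_neg_cancel_left a u

end

section

variable {G : Type*} [AddGroup G] [LinearOrder G] [AddLeftMono G] [AddRightMono G]

theorem strictMono_add_self : StrictMono fun a : G => a + a :=
  fun _ _ h => add_lt_add h h

variable {u x a : G}

theorem le_of_sub_add_sub_eq (h : (a - u) + (a - u) = x - u) (hx : x ≤ u) : a ≤ u := by
  rw [← sub_nonpos, ← add_self_le_add_self_iff, h, add_zero, sub_nonpos]
  exact hx

theorem le_of_sub_add_sub_eq' (h : (a - u) + (a - u) = x - u) (hx : x ≤ u) : x ≤ a := by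
  have ha : a - u ≤ 0 := sub_nonpos.2 (le_of_sub_add_sub_eq h hx)
  rw [← sub_le_sub_iff_right u, ← h]
  exact add_le_of_nonpos_right ha

theorem le_of_sub_add_le_of_sub_add_sub_eq (h : (a - u) + (a - u) = x - u) {y : G}
    (hy : y - u + y ≤ x) : y ≤ a := by
  rw [← sub_le_sub_iff_right u, ← add_self_le_add_self_iff, h, ← add_sub_assoc]
  exact sub_le_sub_right hy u

end

theorem stmt17_general {G : Type*} [AddGroup G] [LinearOrder G]
    [CovariantClass G G (· + ·) (· ≤ ·)]
    [CovariantClass G G (Function.swap (· + ·)) (· ≤ ·)]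
    (u : G)
    (r : G → G) (hr : ∀ x : G, (r x - u) + (r x - u) = x - u) :
    (∀ x : G, 0 ≤ x → x ≤ u → 0 ≤ r x ∧ r x ≤ u) ∧
    (∀ x : G, 0 ≤ x → x ≤ u → max (r x - u + r x) 0 = x) ∧
    (∀ x y : G, 0 ≤ x → x ≤ u → 0 ≤ y → y ≤ u →
      max (y - u + y) 0 ≤ x → y ≤ r x) ∧
    r 0 + r 0 = u ∧ r 0 = u - r 0 ∧ r 0 = -(r 0) + u := by
  have hsq : ∀ x, r x - u + r x = x := fun x => sub_add_eq_of_sub_add_sub_eq (hr x)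
  have hsum : r 0 + r 0 = u := add_self_eq_of_sub_add_eq_zero (hsq 0)
  refine ⟨fun x hx hxu => ⟨hx.trans (le_of_sub_add_sub_eq' (hr x) hxu),
      le_of_sub_add_sub_eq (hr x) hxu⟩,
    fun x hx _ => by rw [hsq x, max_eq_left hx],
    fun x y _ _ _ _ hmax => le_of_sub_add_le_of_sub_add_sub_eq (hr x) ((le_max_left _ _).trans hmax),
    hsum, eq_sub_of_add_eq hsum, eq_neg_add_of_sub_add_eq_zero (hsq 0)⟩

/-- If `(G, u)` is a linearly ordered two-divisible unital ℓ-group, then on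
`M = Γ(G,u) = [0,u]` the map `r x = ((x - u)/2) + u` (characterized by
`(r x - u) + (r x - u) = x - u`) is a weak square root: it maps `M` into `M`
and satisfies (Sq1) and (Sq2); moreover `r 0 = u/2 = (r 0)⁻ = (r 0)∼`,
so `r` is strict. -/
theorem stmt17 {G : Type*} [AddGroup G] [LinearOrder G]
    [CovariantClass G G (· + ·) (· ≤ ·)]
    [CovariantClass G G (Function.swap (· + ·)) (· ≤ ·)]
    (u : G) (hu : 0 ≤ u) (hstrong : ∀ g : G, ∃ n : ℕ, g ≤ n • u)
    (hdiv : ∀ g : G, ∃ h : G, h + h = g)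
    (r : G → G) (hr : ∀ x : G, (r x - u) + (r x - u) = x - u) :
    (∀ x : G, 0 ≤ x → x ≤ u → 0 ≤ r x ∧ r x ≤ u) ∧
    (∀ x : G, 0 ≤ x → x ≤ u → max (r x - u + r x) 0 = x) ∧
    (∀ x y : G, 0 ≤ x → x ≤ u → 0 ≤ y → y ≤ u →
      max (y - u + y) 0 ≤ x → y ≤ r x) ∧
    r 0 + r 0 = u ∧ r 0 = u - r 0 ∧ r 0 = -(r 0) + u :=
  stmt17_general u r hr
end

section
/- In the semidirect-product pseudo MV-algebra M = Γ(H ⋉ ℝ, (2,0)), where H = ((0,∞), ·, ≤) with unit 2 acting on ℝ by φ_h(g) = h·g and the group ordered lexicographically, the map r(h₀, g₀) = (√(2h₀), (2/(√(2h₀)+2))·g₀) is a strict weak square root on M that is not a square root (condition (Sq3) fails). -/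
/-!
Write `sqM q = (q.1 * q.1 / 2, q.1 / 2 * q.2 + q.2)` for the untruncated square, so that
`q ⊙ q = sqM q ∨ (1,0)`. On pairs with positive first coordinate `sqM` is strictly monotone for
the lexicographic order and `rM` is its inverse. Hence `rM p ⊙ rM p = p ∨ (1,0) = p`, and
`sqM q ≤ q ⊙ q ≤ p = sqM (rM p)` gives `q ≤ rM p`; comparing with `sqM (1,0) = (1/2,0)` and
`sqM (2,0) = (2,0)` also shows that `rM` maps `M` into itself. Condition (Sq3) already fails at
`p = (1,1)`: the two sides of its first equation are `(2,-1/2)` and `(2,-2/(√2+2))`.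
-/

namespace Stmt19

/-- The lexicographic order on the semidirect product `H ⋉ ℝ`,
`H = ((0,∞), ·)`, realized on pairs of reals. -/
def le2 (p q : ℝ × ℝ) : Prop := p.1 < q.1 ∨ (p.1 = q.1 ∧ p.2 ≤ q.2)

noncomputable instance (p q : ℝ × ℝ) : Decidable (le2 p q) := by unfold le2; infer_instance

noncomputable def sup2 (p q : ℝ × ℝ) : ℝ × ℝ := if le2 p q then q else p

noncomputable def inf2 (p q : ℝ × ℝ) : ℝ × ℝ := if le2 p q then p else q

/-- `(h₁,g₁) ⊙ (h₂,g₂) = ((h₁h₂)/2, (h₂/2)g₁ + g₂) ∨ (1,0)`. -/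
noncomputable def mulM (p q : ℝ × ℝ) : ℝ × ℝ :=
  sup2 (p.1 * q.1 / 2, q.1 / 2 * p.2 + q.2) (1, 0)

/-- `(h₁,g₁) ⊕ (h₂,g₂) = ((h₁,g₁)·(h₂,g₂)) ∧ (2,0)`, where the group product is
`(h₁h₂, h₂g₁ + g₂)`. -/
noncomputable def oplusM (p q : ℝ × ℝ) : ℝ × ℝ :=
  inf2 (p.1 * q.1, q.1 * p.2 + q.2) (2, 0)

/-- `(h,g)⁻ = (2/h, −(1/h)g)`. -/
noncomputable def lnegM (p : ℝ × ℝ) : ℝ × ℝ := (2 / p.1, -(1 / p.1) * p.2)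

/-- `(h,g)∼ = (2/h, −(2/h)g)`. -/
noncomputable def rnegM (p : ℝ × ℝ) : ℝ × ℝ := (2 / p.1, -(2 / p.1) * p.2)

/-- `r(h₀,g₀) = (√(2h₀), (2/(√(2h₀)+2))·g₀)`. -/
noncomputable def rM (p : ℝ × ℝ) : ℝ × ℝ :=
  (Real.sqrt (2 * p.1), 2 / (Real.sqrt (2 * p.1) + 2) * p.2)

/-- Membership in `M = Γ(H ⋉ ℝ, (2,0)) = [(1,0),(2,0)]`. -/
def Mem (p : ℝ × ℝ) : Prop := le2 (1, 0) p ∧ le2 p (2, 0)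

theorem le2_iff_toLex_le {p q : ℝ × ℝ} : le2 p q ↔ toLex p ≤ toLex q :=
  Prod.Lex.toLex_le_toLex.symm

theorem le2_refl (p : ℝ × ℝ) : le2 p p :=
  le2_iff_toLex_le.2 le_rfl

theorem le2_trans {p q r : ℝ × ℝ} (hpq : le2 p q) (hqr : le2 q r) : le2 p r :=
  le2_iff_toLex_le.2 ((le2_iff_toLex_le.1 hpq).trans (le2_iff_toLex_le.1 hqr))

theorem le2_antisymm {p q : ℝ × ℝ} (hpq : le2 p q) (hqp : le2 q p) : p = q :=
  toLex.injective (le_antisymm (le2_iff_toLex_le.1 hpq) (le2_iff_toLex_le.1 hqp))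

theorem le2_sup2_left (p q : ℝ × ℝ) : le2 p (sup2 p q) := by
  unfold sup2
  split_ifs with h
  · exact h
  · exact le2_refl p

theorem sup2_eq_left {p q : ℝ × ℝ} (hqp : le2 q p) : sup2 p q = p := by
  unfold sup2
  split_ifs with h
  · exact (le2_antisymm h hqp).symm
  · rfl

theorem inf2_eq_left {p q : ℝ × ℝ} (hpq : le2 p q) : inf2 p q = p :=
  if_pos hpq

theorem Mem.one_le_fst {p : ℝ × ℝ} (hp : Mem p) : 1 ≤ p.1 := by
  rcases hp.1 with h | ⟨h, -⟩ <;> simp only at h <;> linarith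

theorem Mem.fst_pos {p : ℝ × ℝ} (hp : Mem p) : 0 < p.1 :=
  zero_lt_one.trans_le hp.one_le_fst

noncomputable def sqM (q : ℝ × ℝ) : ℝ × ℝ := (q.1 * q.1 / 2, q.1 / 2 * q.2 + q.2)

theorem mulM_self (q : ℝ × ℝ) : mulM q q = sup2 (sqM q) (1, 0) := rfl

theorem le2_of_le2_sqM {q q' : ℝ × ℝ} (hq : 0 < q.1) (hq' : 0 < q'.1)
    (h : le2 (sqM q) (sqM q')) : le2 q q' := by
  rcases h with hlt | ⟨heq, hle⟩
  · left
    simp only [sqM] at hlt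
    nlinarith
  · right
    simp only [sqM] at heq hle
    have hfst : q.1 = q'.1 := by nlinarith
    refine ⟨hfst, ?_⟩
    rw [← hfst] at hle
    nlinarith

theorem rM_fst_pos {p : ℝ × ℝ} (hp : 0 < p.1) : 0 < (rM p).1 :=
  Real.sqrt_pos.2 (by linarith)

theorem sqM_rM {p : ℝ × ℝ} (hp : 0 ≤ p.1) : sqM (rM p) = p := by
  obtain ⟨h, g⟩ := p
  have hs : Real.sqrt (2 * h) * Real.sqrt (2 * h) = 2 * h := Real.mul_self_sqrt (by simpa using hp)
  have hs2 : Real.sqrt (2 * h) + 2 ≠ 0 := by positivity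
  simp only [sqM, rM, hs, Prod.mk.injEq]
  constructor
  · ring
  · field_simp

theorem le2_rM_of_le2_mulM_self {p q : ℝ × ℝ} (hp : 0 < p.1) (hq : 0 < q.1)
    (h : le2 (mulM q q) p) : le2 q (rM p) := by
  refine le2_of_le2_sqM hq (rM_fst_pos hp) ?_
  rw [sqM_rM hp.le]
  exact le2_trans (le2_sup2_left _ _) h

theorem Mem.rM {p : ℝ × ℝ} (hp : Mem p) : Mem (rM p) := by
  have hsq : sqM (Stmt19.rM p) = p := sqM_rM hp.fst_pos.le
  constructor
  · refine le2_of_le2_sqM one_pos (rM_fst_pos hp.fst_pos) ?_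
    rw [hsq]
    exact le2_trans (Or.inl (by norm_num [sqM])) hp.1
  · refine le2_of_le2_sqM (rM_fst_pos hp.fst_pos) two_pos ?_
    rw [hsq]
    simpa [sqM] using hp.2

theorem mulM_rM_self {p : ℝ × ℝ} (hp : Mem p) : mulM (rM p) (rM p) = p := by
  rw [mulM_self, sqM_rM hp.fst_pos.le, sup2_eq_left hp.1]

theorem rM_zero : rM (1, 0) = (Real.sqrt 2, 0) := by
  simp [rM]

theorem lnegM_rM_zero : lnegM (rM (1, 0)) = rM (1, 0) := by
  simp [rM_zero, lnegM, Real.div_sqrt]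

theorem mem_one_one : Mem (1, 1) :=
  ⟨Or.inr ⟨rfl, zero_le_one⟩, Or.inl one_lt_two⟩

theorem rM_lnegM_one_one : rM (lnegM (1, 1)) = (2, -1 / 2) := by
  have h4 : Real.sqrt 4 = 2 := by
    rw [show (4 : ℝ) = 2 ^ 2 by norm_num, Real.sqrt_sq zero_le_two]
  norm_num [rM, lnegM, h4]

theorem oplusM_lnegM_rM_one_one :
    oplusM (lnegM (rM (1, 1))) (rM (1, 0)) = (2, -2 / (Real.sqrt 2 + 2)) := by
  have hs : Real.sqrt 2 * Real.sqrt 2 = 2 := Real.mul_self_sqrt zero_le_two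
  have hprod : ((lnegM (rM (1, 1))).1 * (rM (1, 0)).1,
      (rM (1, 0)).1 * (lnegM (rM (1, 1))).2 + (rM (1, 0)).2) = (2, -2 / (Real.sqrt 2 + 2)) := by
    norm_num [rM, lnegM, Real.div_sqrt, hs, neg_div]
  rw [oplusM, hprod]
  refine inf2_eq_left (Or.inr ⟨rfl, ?_⟩)
  show -2 / (Real.sqrt 2 + 2) ≤ 0
  exact div_nonpos_of_nonpos_of_nonneg (by norm_num) (by positivity)

theorem rM_lnegM_one_one_ne :
    rM (lnegM (1, 1)) ≠ oplusM (lnegM (rM (1, 1))) (rM (1, 0)) := by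
  rw [rM_lnegM_one_one, oplusM_lnegM_rM_one_one]
  intro h
  have hsnd : (-1 / 2 : ℝ) = -2 / (Real.sqrt 2 + 2) := congrArg Prod.snd h
  have hs : Real.sqrt 2 * Real.sqrt 2 = 2 := Real.mul_self_sqrt zero_le_two
  field_simp at hsnd
  nlinarith

/-- In the pseudo MV-algebra `M = Γ(H ⋉ ℝ, (2,0))`, the map `rM` maps `M` into
`M`, satisfies (Sq1), (Sq2), is strict (`r(0) = r(0)⁻`, where `(1,0)` is the
zero of `M`), but (Sq3) fails, so `rM` is a strict weak square root that is
not a square root. -/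
theorem stmt19 :
    (∀ p : ℝ × ℝ, Mem p → Mem (rM p)) ∧
    (∀ p : ℝ × ℝ, Mem p → mulM (rM p) (rM p) = p) ∧
    (∀ p q : ℝ × ℝ, Mem p → Mem q → le2 (mulM q q) p → le2 q (rM p)) ∧
    rM (1, 0) = lnegM (rM (1, 0)) ∧
    ¬ (∀ p : ℝ × ℝ, Mem p →
        rM (lnegM p) = oplusM (lnegM (rM p)) (rM (1, 0)) ∧
        rM (rnegM p) = oplusM (rM (1, 0)) (rnegM (rM p))) :=
  ⟨fun _ hp => hp.rM,
   fun _ hp => mulM_rM_self hp,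
   fun _ _ hp hq h => le2_rM_of_le2_mulM_self hp.fst_pos hq.fst_pos h,
   lnegM_rM_zero.symm,
   fun hSq3 => rM_lnegM_one_one_ne (hSq3 (1, 1) mem_one_one).1⟩

end Stmt19
end
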